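/- The set B^reg_1 of regular bridges is a Borel subset of C([0,1],ℝ). -/

import Mathlib

/-!
Both regularity conditions only involve countably many suprema and infima over fixed
intervals, and these depend continuously on `w`. A maximiser over `[c, d]` is unique iff for
no rationals `p < q` both `[c, p]` and `[q, d]` carry the maximum. A strict local minimum at
level `0` is seen on a rational window `[a, b]` around it as a unique minimiser with minimum `0`.
Hence `B^reg_1` is a countable Boolean combination of open and closed sets.
-/

open Set Filter MeasureTheory Topology UniformConvergence

noncomputable section

/-- Supremum of `f` over the interval `[s,t]`. -/
def maxOnIcc (f : ℝ → ℝ) (s t : ℝ) : ℝ := sSup (f '' Set.Icc s t)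

/-- Infimum of `f` over the interval `[s,t]`. -/
def minOnIcc (f : ℝ → ℝ) (s t : ℝ) : ℝ := sInf (f '' Set.Icc s t)

/-- `ρ(w)`: the first time in `[0,a]` at which `f` attains its maximum over `[0,a]`. -/
def rho (a : ℝ) (f : ℝ → ℝ) : ℝ := sInf {s | s ∈ Set.Icc 0 a ∧ f s = maxOnIcc f 0 a}

/-- membership in `B_a`: continuous bridges of length `a`. -/
def IsBridge (a : ℝ) (f : ℝ → ℝ) : Prop :=
  ContinuousOn f (Set.Icc 0 a) ∧ f 0 = 0 ∧ f a = 0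

/-- membership in `B*_a`: bridges whose maximum is attained at a unique point. -/
def IsBridgeStar (a : ℝ) (f : ℝ → ℝ) : Prop :=
  IsBridge a f ∧ ∃! s, s ∈ Set.Icc 0 a ∧ ∀ u ∈ Set.Icc 0 a, f u ≤ f s

/-- membership in `M_a`. -/
def IsMeander (a : ℝ) (f : ℝ → ℝ) : Prop :=
  ContinuousOn f (Set.Icc 0 a) ∧ f 0 = 0 ∧ ∀ s ∈ Set.Icc 0 a, f s ≤ f a

/-- membership in `M*_a`. -/
def IsMeanderStar (a : ℝ) (f : ℝ → ℝ) : Prop :=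
  ContinuousOn f (Set.Icc 0 a) ∧ f 0 = 0 ∧ rho a f = a

/-- The transformation `T^me_a`. -/
def Tme (a : ℝ) (f : ℝ → ℝ) : ℝ → ℝ := fun t =>
  if t ≤ rho a f then f t else f (rho a f) + f (a + rho a f - t)

/-- `γ_{f(a)/2}`: the first time in `[0,a]` at which `f` hits the level `f(a)/2`. -/
def gammaHalf (a : ℝ) (f : ℝ → ℝ) : ℝ := sInf {s | s ∈ Set.Icc 0 a ∧ f s = f a / 2}

/-- The transformation `T^br_a`. -/
def Tbr (a : ℝ) (f : ℝ → ℝ) : ℝ → ℝ := fun t =>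
  if t ≤ gammaHalf a f then f t else f (a + gammaHalf a f - t) - f (gammaHalf a f)

/-- The Brownian scaling map `S_b`. -/
def scaleMap (b : ℝ) (f : ℝ → ℝ) : ℝ → ℝ := fun t => (Real.sqrt b)⁻¹ * f (b * t)

/-- `m^br_t(w)` (for bridges of length `1`). -/
def mbr (f : ℝ → ℝ) (t : ℝ) : ℝ := if t ≤ rho 1 f then maxOnIcc f 0 t else maxOnIcc f t 1

/-- `g^br_t(w)`: left endpoint of the excursion of `m^br(w) - w` straddling `t`. -/
def gbr (f : ℝ → ℝ) (t : ℝ) : ℝ := sSup {s | s ∈ Set.Icc 0 t ∧ mbr f s - f s = 0}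

/-- `d^br_t(w)`: right endpoint of the excursion of `m^br(w) - w` straddling `t`,
with the convention `d^br_1(w) = 1`. -/
def dbr (f : ℝ → ℝ) (t : ℝ) : ℝ :=
  if t = 1 then 1 else sInf {s | s ∈ Set.Ioc t 1 ∧ mbr f s - f s = 0}

/-- `r^br_t(w)`: maximum of `m^br(w) - w` over the excursion interval. -/
def rbr (f : ℝ → ℝ) (t : ℝ) : ℝ :=
  sSup ((fun s => mbr f s - f s) '' Set.Icc (gbr f t) (dbr f t))

/-- `u^br_t(w)`: Lebesgue time spent, up to time `t`, in non-excised excursions. -/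
def ubr (f : ℝ → ℝ) (t : ℝ) : ℝ := ∫ s in (0:ℝ)..t, if rbr f s < mbr f s then (1:ℝ) else 0

/-- `α^br_s(w)`, with the convention `α^br_{u^br_1(w)}(w) = 1`. -/
def abr (f : ℝ → ℝ) (s : ℝ) : ℝ :=
  if s = ubr f 1 then 1 else sInf {t | t ∈ Set.Icc (0:ℝ) 1 ∧ s < ubr f t}

/-- `H^br(w)` (as a function; it is relevant on `[0, u^br_1(w)]`). -/
def Hbr (f : ℝ → ℝ) : ℝ → ℝ := fun t => f (abr f t)

/-- `G^br(w)`. -/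
def Gbr (f : ℝ → ℝ) : ℝ → ℝ := if 0 < ubr f 1 then scaleMap (ubr f 1) (Hbr f) else 0

/-- the past-maximum function `w̄`. -/
def pastMax (f : ℝ → ℝ) (t : ℝ) : ℝ := maxOnIcc f 0 t

/-- `g^me_t(w)`. -/
def gme (f : ℝ → ℝ) (t : ℝ) : ℝ := sSup {s | s ∈ Set.Icc 0 t ∧ pastMax f s - f s = 0}

/-- `d^me_t(w)`, with the convention `d^me_1(w) = 1`. -/
def dme (f : ℝ → ℝ) (t : ℝ) : ℝ :=
  if t = 1 then 1 else sInf {s | s ∈ Set.Ioc t 1 ∧ pastMax f s - f s = 0}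

/-- `r^me_t(w)`. -/
def rme (f : ℝ → ℝ) (t : ℝ) : ℝ :=
  sSup ((fun s => pastMax f s - f s) '' Set.Icc (gme f t) (dme f t))

/-- `u^me_t(w)`. -/
def ume (f : ℝ → ℝ) (t : ℝ) : ℝ :=
  if t ≤ gammaHalf 1 f then ∫ s in (0:ℝ)..t, if rme f s < pastMax f s then (1:ℝ) else 0
  else (∫ s in (0:ℝ)..gammaHalf 1 f, if rme f s < pastMax f s then (1:ℝ) else 0) +
    ∫ s in gammaHalf 1 f..t, if rme f s < pastMax f s - f 1 / 2 then (1:ℝ) else 0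

/-- `α^me_s(w)`, with the convention `α^me_{u^me_1(w)}(w) = 1`. -/
def ame (f : ℝ → ℝ) (s : ℝ) : ℝ :=
  if s = ume f 1 then 1 else sInf {t | t ∈ Set.Icc (0:ℝ) 1 ∧ s < ume f t}

/-- `H^me(w)`. -/
def Hme (f : ℝ → ℝ) : ℝ → ℝ := fun t => f (ame f t)

/-- `G^me(w)`. -/
def Gme (f : ℝ → ℝ) : ℝ → ℝ := if 0 < ume f 1 then scaleMap (ume f 1) (Hme f) else 0

/-- Regularity property (i): uniqueness of one-sided maximizers at rational times. -/
def UniqueOneSidedMax (f : ℝ → ℝ) : Prop :=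
  ∀ t : ℚ, (t : ℝ) ∈ Set.Icc (0:ℝ) 1 →
    (∃! s, s ∈ Set.Icc (0:ℝ) (t:ℝ) ∧ ∀ u ∈ Set.Icc (0:ℝ) (t:ℝ), f u ≤ f s) ∧
    (∃! s, s ∈ Set.Icc ((t:ℝ)) 1 ∧ ∀ u ∈ Set.Icc ((t:ℝ)) 1, f u ≤ f s)

/-- Regularity property (ii): the level `0` is not a strict local minimum of `f` on `[0,1]`. -/
def NoStrictLocalMinAtZero (f : ℝ → ℝ) : Prop :=
  ¬ ∃ t ∈ Set.Icc (0:ℝ) 1, f t = 0 ∧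
      ∃ δ > 0, ∀ s ∈ Set.Icc (0:ℝ) 1, s ≠ t → |s - t| < δ → f t < f s

/-- `w ∈ B^reg_1`. -/
def Regular (f : ℝ → ℝ) : Prop :=
  IsBridge 1 f ∧ UniqueOneSidedMax f ∧ NoStrictLocalMinAtZero f

section SingleFunction

variable {f : ℝ → ℝ} {c d s : ℝ}

theorem maxOnIcc_eq_of_isMaxOn (hs : s ∈ Icc c d) (hmax : ∀ u ∈ Icc c d, f u ≤ f s) :
    maxOnIcc f c d = f s :=
  IsGreatest.csSup_eq ⟨mem_image_of_mem f hs, forall_mem_image.2 hmax⟩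

theorem minOnIcc_eq_of_isMinOn (hs : s ∈ Icc c d) (hmin : ∀ u ∈ Icc c d, f s ≤ f u) :
    minOnIcc f c d = f s :=
  IsLeast.csInf_eq ⟨mem_image_of_mem f hs, forall_mem_image.2 hmin⟩

theorem maxOnIcc_eq_iff_exists_isMaxOn {c' d' : ℝ} (hf : ContinuousOn f (Icc c d))
    (hc : c ≤ c') (hcd' : c' ≤ d') (hd : d' ≤ d) :
    maxOnIcc f c' d' = maxOnIcc f c d ↔ ∃ s ∈ Icc c' d', ∀ u ∈ Icc c d, f u ≤ f s := by
  have hsub : Icc c' d' ⊆ Icc c d := Icc_subset_Icc hc hd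
  constructor
  · intro heq
    obtain ⟨s, hs, hmax⟩ :=
      isCompact_Icc.exists_isMaxOn (nonempty_Icc.2 hcd') (hf.mono hsub)
    refine ⟨s, hs, fun u hu => ?_⟩
    calc f u ≤ maxOnIcc f c d :=
          le_csSup (isCompact_Icc.bddAbove_image hf) (mem_image_of_mem f hu)
      _ = f s := by rw [← heq, maxOnIcc_eq_of_isMaxOn hs hmax]
  · rintro ⟨s, hs, hmax⟩
    rw [maxOnIcc_eq_of_isMaxOn hs (fun u hu => hmax u (hsub hu)),
      maxOnIcc_eq_of_isMaxOn (hsub hs) hmax]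

/-- Two maximisers would be separated by rationals `p < q`, and then both `[c, p]` and
`[q, d]` would carry the maximum. -/
theorem existsUnique_isMaxOn_Icc_iff (hf : ContinuousOn f (Icc c d)) (hcd : c ≤ d) :
    (∃! s, s ∈ Icc c d ∧ ∀ u ∈ Icc c d, f u ≤ f s) ↔
      ∀ p q : ℚ, c ≤ p → (p : ℝ) < q → (q : ℝ) ≤ d →
        ¬(maxOnIcc f c p = maxOnIcc f c d ∧ maxOnIcc f q d = maxOnIcc f c d) := by
  constructor
  · rintro ⟨s, -, huniq⟩ p q hcp hpq hqd ⟨hp, hq⟩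
    obtain ⟨s₁, hs₁, hmax₁⟩ :=
      (maxOnIcc_eq_iff_exists_isMaxOn hf le_rfl hcp (hpq.le.trans hqd)).1 hp
    obtain ⟨s₂, hs₂, hmax₂⟩ :=
      (maxOnIcc_eq_iff_exists_isMaxOn hf (hcp.trans hpq.le) hqd le_rfl).1 hq
    have h₁ : s₁ = s := huniq s₁ ⟨⟨hs₁.1, hs₁.2.trans (hpq.le.trans hqd)⟩, hmax₁⟩
    have h₂ : s₂ = s := huniq s₂ ⟨⟨(hcp.trans hpq.le).trans hs₂.1, hs₂.2⟩, hmax₂⟩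
    linarith [hs₁.2, hs₂.1]
  · intro htest
    have no_two : ∀ s₁ s₂, (s₁ ∈ Icc c d ∧ ∀ u ∈ Icc c d, f u ≤ f s₁) →
        (s₂ ∈ Icc c d ∧ ∀ u ∈ Icc c d, f u ≤ f s₂) → ¬s₁ < s₂ := by
      rintro s₁ s₂ ⟨hs₁, hmax₁⟩ ⟨hs₂, hmax₂⟩ hlt
      obtain ⟨p, hs₁p, hps₂⟩ := exists_rat_btwn hlt
      obtain ⟨q, hpq, hqs₂⟩ := exists_rat_btwn hps₂
      have hcp : c ≤ p := hs₁.1.trans hs₁p.le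
      have hqd : (q : ℝ) ≤ d := hqs₂.le.trans hs₂.2
      exact htest p q hcp hpq hqd
        ⟨(maxOnIcc_eq_iff_exists_isMaxOn hf le_rfl hcp (hpq.le.trans hqd)).2
            ⟨s₁, ⟨hs₁.1, hs₁p.le⟩, hmax₁⟩,
          (maxOnIcc_eq_iff_exists_isMaxOn hf (hcp.trans hpq.le) hqd le_rfl).2
            ⟨s₂, ⟨hqs₂.le, hs₂.2⟩, hmax₂⟩⟩
    obtain ⟨s, hs, hmax⟩ := isCompact_Icc.exists_isMaxOn (nonempty_Icc.2 hcd) hf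
    exact ⟨s, ⟨hs, hmax⟩, fun y hy =>
      le_antisymm (le_of_not_gt (no_two s y ⟨hs, hmax⟩ hy))
        (le_of_not_gt (no_two y s hy ⟨hs, hmax⟩))⟩


def StrictZeroMinOn (f : ℝ → ℝ) (a b : ℝ) : Prop :=
  0 ≤ a ∧ a < b ∧ b ≤ 1 ∧ minOnIcc f a b = 0 ∧
    (∃! s, s ∈ Icc a b ∧ ∀ u ∈ Icc a b, f s ≤ f u) ∧ (a = 0 ∨ 0 < f a) ∧ (b = 1 ∨ 0 < f b)

theorem exists_rat_left_of_nonneg {t δ : ℝ} (ht : 0 ≤ t) (hδ : 0 < δ) :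
    ∃ a : ℚ, 0 ≤ (a : ℝ) ∧ t - δ < a ∧ (a : ℝ) ≤ t ∧ ((a : ℝ) = 0 ∨ (a : ℝ) < t) := by
  rcases ht.eq_or_lt with rfl | ht
  · exact ⟨0, by simpa using hδ⟩
  · obtain ⟨a, hlo, hat⟩ := exists_rat_btwn (max_lt (sub_lt_self t hδ) ht)
    exact ⟨a, (le_max_right _ _).trans hlo.le, (le_max_left _ _).trans_lt hlo, hat.le, .inr hat⟩

theorem exists_rat_right_of_le_one {t δ : ℝ} (ht : t ≤ 1) (hδ : 0 < δ) :
    ∃ b : ℚ, (b : ℝ) ≤ 1 ∧ (b : ℝ) < t + δ ∧ t ≤ b ∧ ((b : ℝ) = 1 ∨ t < b) := by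
  obtain ⟨a, h₀, hδa, hat, ha⟩ := exists_rat_left_of_nonneg (sub_nonneg.2 ht) hδ
  refine ⟨1 - a, ?_, ?_, ?_, ?_⟩ <;> push_cast
  · linarith
  · linarith
  · linarith
  · rcases ha with ha | ha
    · left; linarith
    · right; linarith

/-- A strict local minimum at level `0` is the unique minimiser over small rational windows
`[a, b]`; the endpoint conditions of `StrictZeroMinOn` keep the minimiser off the endpoints of
`[a, b]` that are interior to `[0, 1]`. -/
theorem exists_strictLocalMin_zero_iff :
    (∃ t ∈ Icc (0 : ℝ) 1, f t = 0 ∧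
        ∃ δ > 0, ∀ s ∈ Icc (0 : ℝ) 1, s ≠ t → |s - t| < δ → f t < f s) ↔
      ∃ a b : ℚ, StrictZeroMinOn f a b := by
  constructor
  · rintro ⟨t, ⟨ht₀, ht₁⟩, hft, δ, hδ, hloc⟩
    obtain ⟨a, ha₀, hδa, hat, ha⟩ := exists_rat_left_of_nonneg ht₀ hδ
    obtain ⟨b, hb₁, hbδ, htb, hb⟩ := exists_rat_right_of_le_one ht₁ hδ
    have hpos : ∀ s ∈ Icc (a : ℝ) b, s ≠ t → 0 < f s := fun s hs hst =>
      hft ▸ hloc s ⟨ha₀.trans hs.1, hs.2.trans hb₁⟩ hst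
        (abs_sub_lt_iff.2 ⟨by linarith [hs.2], by linarith [hs.1]⟩)
    have hmin : ∀ u ∈ Icc (a : ℝ) b, f t ≤ f u := fun u hu => by
      rcases eq_or_ne u t with rfl | hut
      · exact le_rfl
      · exact hft ▸ (hpos u hu hut).le
    have htab : t ∈ Icc (a : ℝ) b := ⟨hat, htb⟩
    have hab : (a : ℝ) < b := by
      rcases ha with ha | ha <;> rcases hb with hb | hb <;> linarith
    refine ⟨a, b, ha₀, hab, hb₁, hft ▸ minOnIcc_eq_of_isMinOn htab hmin,
      ⟨t, ⟨htab, hmin⟩, fun y ⟨hy, hymin⟩ => ?_⟩, ?_, ?_⟩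
    · by_contra hyt
      linarith [hpos y hy hyt, hymin t htab]
    · exact ha.imp_right fun ha => hpos a ⟨le_rfl, hab.le⟩ ha.ne
    · exact hb.imp_right fun hb => hpos b ⟨hab.le, le_rfl⟩ hb.ne'
  · rintro ⟨a, b, ha₀, -, hb₁, hmin₀, ⟨s, ⟨hs, hmin⟩, huniq⟩, ha, hb⟩
    have hfs : f s = 0 := (minOnIcc_eq_of_isMinOn hs hmin).symm.trans hmin₀
    have hpos : ∀ u ∈ Icc (a : ℝ) b, u ≠ s → 0 < f u := fun u hu hus => by
      by_contra! hu₀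
      exact hus (huniq u ⟨hu, fun v hv => hu₀.trans (hfs ▸ hmin v hv)⟩)
    obtain ⟨δa, hδa, hleft⟩ : ∃ δ > 0, ∀ r, 0 ≤ r → s - δ < r → (a : ℝ) ≤ r := by
      rcases ha with ha | ha
      · exact ⟨1, one_pos, fun r hr _ => ha ▸ hr⟩
      · have has : (a : ℝ) < s := hs.1.lt_of_ne fun h => by rw [← h] at hfs; linarith
        exact ⟨s - a, sub_pos.2 has, fun r _ hr => by linarith⟩
    obtain ⟨δb, hδb, hright⟩ : ∃ δ > 0, ∀ r, r ≤ 1 → r < s + δ → r ≤ (b : ℝ) := by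
      rcases hb with hb | hb
      · exact ⟨1, one_pos, fun r hr _ => hb ▸ hr⟩
      · have hsb : s < (b : ℝ) := hs.2.lt_of_ne fun h => by rw [h] at hfs; linarith
        exact ⟨b - s, sub_pos.2 hsb, fun r _ hr => by linarith⟩
    refine ⟨s, ⟨ha₀.trans hs.1, hs.2.trans hb₁⟩, hfs, min δa δb, lt_min hδa hδb,
      fun r ⟨hr₀, hr₁⟩ hrs hr => hfs ▸ hpos r ⟨hleft r hr₀ ?_, hright r hr₁ ?_⟩ hrs⟩
    · linarith [(abs_sub_lt_iff.1 hr).2, min_le_left δa δb]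
    · linarith [(abs_sub_lt_iff.1 hr).1, min_le_right δa δb]

end SingleFunction

section Family

variable {X : Type*} [TopologicalSpace X] {f : X → ℝ → ℝ}

theorem continuous_maxOnIcc (hf : Continuous ↿f) (c d : ℝ) :
    Continuous fun x => maxOnIcc (f x) c d :=
  isCompact_Icc.continuous_sSup hf

theorem continuous_minOnIcc (hf : Continuous ↿f) (c d : ℝ) :
    Continuous fun x => minOnIcc (f x) c d :=
  isCompact_Icc.continuous_sInf hf

variable [MeasurableSpace X] [OpensMeasurableSpace X]

theorem measurable_existsUnique_isMaxOn_Icc (hf : Continuous ↿f) (c d : ℝ) :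
    Measurable fun x => ∃! s, s ∈ Icc c d ∧ ∀ u ∈ Icc c d, f x u ≤ f x s := by
  rcases lt_or_ge d c with hdc | hcd
  · simp only [Icc_eq_empty_of_lt hdc, mem_empty_iff_false, false_and, existsUnique_false]
    exact measurable_const
  have hmax := fun c d => (continuous_maxOnIcc hf c d).measurable
  simp only [fun x => existsUnique_isMaxOn_Icc_iff (hf.uncurry_left x).continuousOn hcd]
  fun_prop

theorem measurable_existsUnique_isMinOn_Icc (hf : Continuous ↿f) (c d : ℝ) :
    Measurable fun x => ∃! s, s ∈ Icc c d ∧ ∀ u ∈ Icc c d, f x s ≤ f x u := by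
  simpa only [neg_le_neg_iff] using
    measurable_existsUnique_isMaxOn_Icc (f := fun x s => -f x s) hf.neg c d

theorem measurable_strictZeroMinOn (hf : Continuous ↿f) (a b : ℝ) :
    Measurable fun x => StrictZeroMinOn (f x) a b := by
  have hmin := (continuous_minOnIcc hf a b).measurable
  have hunique := measurable_existsUnique_isMinOn_Icc hf a b
  have heval := fun t => (hf.uncurry_right t).measurable
  unfold StrictZeroMinOn
  fun_prop

theorem measurable_noStrictLocalMinAtZero (hf : Continuous ↿f) :
    Measurable fun x => NoStrictLocalMinAtZero (f x) := by
  simp only [NoStrictLocalMinAtZero, exists_strictLocalMin_zero_iff]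
  exact .not <| .exists fun a => .exists fun b => measurable_strictZeroMinOn hf a b

theorem measurable_uniqueOneSidedMax (hf : Continuous ↿f) :
    Measurable fun x => UniqueOneSidedMax (f x) := by
  have hunique := measurable_existsUnique_isMaxOn_Icc hf
  unfold UniqueOneSidedMax
  fun_prop

theorem measurable_regular (hf : Continuous ↿f) : Measurable fun x => Regular (f x) := by
  have hbridge : ∀ x, IsBridge 1 (f x) ↔ f x 0 = 0 ∧ f x 1 = 0 := fun x =>
    and_iff_right (hf.uncurry_left x).continuousOn
  have heval := fun t => (hf.uncurry_right t).measurable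
  simp only [Regular, hbridge]
  exact ((heval 0).eq_const 0).and ((heval 1).eq_const 0) |>.and
    (measurable_uniqueOneSidedMax hf |>.and (measurable_noStrictLocalMinAtZero hf))

end Family

/-- `B^reg_1` is a Borel subset of `C([0,1],ℝ)`. -/
theorem stmt10 :
    MeasurableSet[borel C(Set.Icc (0:ℝ) 1, ℝ)]
      {w : C(Set.Icc (0:ℝ) 1, ℝ) | Regular (Set.IccExtend zero_le_one ⇑w)} := by
  borelize C(Set.Icc (0:ℝ) 1, ℝ)
  exact measurableSet_setOfPred.2 (measurable_regular (by fun_prop))
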